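/- The surface energy density θ_p is Hölder continuous on [0,∞) with exponent 2/(p+1), i.e. θ_p ∈ C^{0, 2/(p+1)}([0,∞)); this follows from its monotonicity, subadditivity and the bound θ_p(s) ≤ c s^{2/(p+1)}. -/

import Mathlib

open MeasureTheory Set Filter Topology

/-- A pair of `H¹` functions on the interval `(0,T)`, described through their
absolutely continuous representatives `a`, `b` together with their
square-integrable weak derivatives `da`, `db`. -/
structure H1Pair (T : ℝ) where
  a : ℝ → ℝ
  b : ℝ → ℝ
  da : ℝ → ℝ
  db : ℝ → ℝ
  da_mem : MeasureTheory.MemLp da 2 (MeasureTheory.volume.restrict (Set.Ioo (0:ℝ) T))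
  db_mem : MeasureTheory.MemLp db 2 (MeasureTheory.volume.restrict (Set.Ioo (0:ℝ) T))
  a_ftc : ∀ x ∈ Set.Icc (0:ℝ) T, a x = a 0 + ∫ t in Set.Ioc (0:ℝ) x, da t
  b_ftc : ∀ x ∈ Set.Icc (0:ℝ) T, b x = b 0 + ∫ t in Set.Ioc (0:ℝ) x, db t

/-- Membership in the admissible class `U_s(0,T)`: `0 ≤ β ≤ 1`, `α(0)=0`, `α(T)=s`,
`β(0)=β(T)=1`. -/
def H1Pair.Admissible {T : ℝ} (s : ℝ) (P : H1Pair T) : Prop :=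
  (∀ t ∈ Set.Icc (0:ℝ) T, P.b t ∈ Set.Icc (0:ℝ) 1) ∧
  P.a 0 = 0 ∧ P.a T = s ∧ P.b 0 = 1 ∧ P.b T = 1

/-- `ψ` is an admissible damage function of order `p` with constant `κ`: it is
continuous, nondecreasing and nonnegative on `[0,1)`, vanishes exactly at `0`, and
`(1-s)^p ψ(s) → κ` as `s → 1⁻`. -/
def AdmissiblePsi (p κ : ℝ) (ψ : ℝ → ℝ) : Prop :=
  ContinuousOn ψ (Set.Ico 0 1) ∧
  MonotoneOn ψ (Set.Ico 0 1) ∧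
  (∀ x ∈ Set.Ico (0:ℝ) 1, 0 ≤ ψ x) ∧
  (∀ x ∈ Set.Ico (0:ℝ) 1, (ψ x = 0 ↔ x = 0)) ∧
  Filter.Tendsto (fun x => (1 - x) ^ p * ψ x) (nhdsWithin 1 (Set.Iio 1)) (nhds κ)

/-- The surface energy `∫₀¹ |1-β| √(ψ(β)² |α'|² + |β'|²) dt` of a pair, where at
points with `β = 1` the product `|1-β| ψ(β)` is interpreted as `+∞`; that is, the
integrand equals `+∞` wherever `β = 1` and `α' ≠ 0`. -/
noncomputable def thetaEnergy (ψ : ℝ → ℝ) (P : H1Pair 1) : ENNReal :=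
  ∫⁻ t in Set.Ioo (0:ℝ) 1,
    (if P.b t = 1 ∧ P.da t ≠ 0 then ⊤ else
      ENNReal.ofReal (|1 - P.b t| *
        Real.sqrt ((ψ (P.b t))^2 * (P.da t)^2 + (P.db t)^2)))

/-- The surface energy density `θ_p(s)`, as an extended real number. -/
noncomputable def thetaE (ψ : ℝ → ℝ) (s : ℝ) : ENNReal :=
  ⨅ (P : H1Pair 1) (_ : P.Admissible s), thetaEnergy ψ P

/-- The surface energy density `θ_p(s)`. -/
noncomputable def theta (ψ : ℝ → ℝ) (s : ℝ) : ℝ := (thetaE ψ s).toReal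

noncomputable section




instance vol01 : IsFiniteMeasure (volume.restrict (Ioo (0:ℝ) 1)) := by
  constructor
  rw [Measure.restrict_apply_univ]
  simp [Real.volume_Ioo]

lemma emb_two : MeasurableEmbedding (fun x : ℝ => 2 * x) :=
  (Homeomorph.mulLeft₀ (2:ℝ) two_ne_zero).measurableEmbedding

lemma emb_affine : MeasurableEmbedding (fun x : ℝ => 2 * x - 1) := by
  have h : (fun x : ℝ => 2 * x - 1) = (fun y : ℝ => y + (-1)) ∘ (fun x : ℝ => 2 * x) := by
    funext x; simp [sub_eq_add_neg]
  rw [h]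
  exact (Homeomorph.addRight (-1:ℝ)).measurableEmbedding.comp emb_two

lemma map_two_volume : Measure.map (fun x : ℝ => 2 * x) volume
    = ENNReal.ofReal (1/2) • volume := by
  have := Real.map_volume_mul_left (a := (2:ℝ)) two_ne_zero
  simpa [abs_of_pos] using this

lemma map_affine_volume : Measure.map (fun x : ℝ => 2 * x - 1) volume
    = ENNReal.ofReal (1/2) • volume := by
  have h : (fun x : ℝ => 2 * x - 1) = (fun y : ℝ => y + (-1)) ∘ (fun x : ℝ => 2 * x) := by
    funext x; simp [sub_eq_add_neg]
  rw [h, ← Measure.map_map (measurable_add_const _) (measurable_const_mul _), map_two_volume,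
    Measure.map_smul, map_add_right_eq_self]

lemma preimage_two : (fun x : ℝ => 2 * x) ⁻¹' (Ioo 0 1) = Ioo (0:ℝ) (1/2) := by
  ext x; simp only [mem_preimage, mem_Ioo]
  constructor <;> rintro ⟨h1, h2⟩ <;> constructor <;> linarith

lemma preimage_affine : (fun x : ℝ => 2 * x - 1) ⁻¹' (Ioo 0 1) = Ioo (1/2:ℝ) 1 := by
  ext x; simp only [mem_preimage, mem_Ioo]
  constructor <;> rintro ⟨h1, h2⟩ <;> constructor <;> linarith

lemma map_two_restrict : Measure.map (fun x : ℝ => 2 * x) (volume.restrict (Ioo (0:ℝ) (1/2)))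
    = ENNReal.ofReal (1/2) • volume.restrict (Ioo (0:ℝ) 1) := by
  rw [← preimage_two, ← Measure.restrict_map (measurable_const_mul _) measurableSet_Ioo,
    map_two_volume, Measure.restrict_smul]

lemma map_affine_restrict :
    Measure.map (fun x : ℝ => 2 * x - 1) (volume.restrict (Ioo (1/2:ℝ) 1))
    = ENNReal.ofReal (1/2) • volume.restrict (Ioo (0:ℝ) 1) := by
  rw [← preimage_affine, ← Measure.restrict_map emb_affine.measurable measurableSet_Ioo,
    map_affine_volume, Measure.restrict_smul]

lemma lint_half (f : ℝ → ENNReal) :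
    ∫⁻ x in Ioo (0:ℝ) (1/2), f (2 * x) = ENNReal.ofReal (1/2) * ∫⁻ y in Ioo (0:ℝ) 1, f y := by
  rw [← emb_two.lintegral_map, map_two_restrict, lintegral_smul_measure, smul_eq_mul]

lemma lint_half' (f : ℝ → ENNReal) :
    ∫⁻ x in Ioo (1/2:ℝ) 1, f (2 * x - 1) = ENNReal.ofReal (1/2) * ∫⁻ y in Ioo (0:ℝ) 1, f y := by
  rw [← emb_affine.lintegral_map, map_affine_restrict, lintegral_smul_measure, smul_eq_mul]

lemma memLp_comp_half {f : ℝ → ℝ} (hf : MemLp f 2 (volume.restrict (Ioo (0:ℝ) 1))) :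
    MemLp (fun x => f (2 * x)) 2 (volume.restrict (Ioo (0:ℝ) (1/2))) := by
  have := emb_two.memLp_map_measure_iff (g := f) (p := 2)
    (μ := volume.restrict (Ioo (0:ℝ) (1/2)))
  rw [map_two_restrict] at this
  exact this.1 (hf.smul_measure (by simp))

lemma memLp_comp_half' {f : ℝ → ℝ} (hf : MemLp f 2 (volume.restrict (Ioo (0:ℝ) 1))) :
    MemLp (fun x => f (2 * x - 1)) 2 (volume.restrict (Ioo (1/2:ℝ) 1)) := by
  have := emb_affine.memLp_map_measure_iff (g := f) (p := 2)
    (μ := volume.restrict (Ioo (1/2:ℝ) 1))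
  rw [map_affine_restrict] at this
  exact this.1 (hf.smul_measure (by simp))





lemma memLp_add_meas {f : ℝ → ℝ} {μ ν : Measure ℝ} (hμ : MemLp f 2 μ) (hν : MemLp f 2 ν) :
    MemLp f 2 (μ + ν) := by
  refine ⟨hμ.1.add_measure hν.1, ?_⟩
  have h1 := hμ.2; have h2 := hν.2
  rw [eLpNorm_eq_lintegral_rpow_enorm_toReal two_ne_zero ENNReal.ofNat_ne_top,
      ENNReal.rpow_lt_top_iff_of_pos (by norm_num)] at h1 h2 ⊢
  rw [lintegral_add_measure]
  exact ENNReal.add_lt_top.2 ⟨h1, h2⟩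

lemma Ioo01_split : Ioo (0:ℝ) 1 = Ioc (0:ℝ) (1/2) ∪ Ioo (1/2:ℝ) 1 :=
  (Ioc_union_Ioo_eq_Ioo (by norm_num) (by norm_num)).symm

lemma restrict_split : (volume : Measure ℝ).restrict (Ioo (0:ℝ) 1)
    = volume.restrict (Ioc (0:ℝ) (1/2)) + volume.restrict (Ioo (1/2:ℝ) 1) := by
  rw [Ioo01_split, Measure.restrict_union (by rw [Set.disjoint_left]; rintro x ⟨_, h2⟩ ⟨h3, _⟩; exact absurd h2 (not_le.2 h3)) measurableSet_Ioo]

/-- Membership of the glued derivative. -/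
lemma glue_mem {f g : ℝ → ℝ} (hf : MemLp f 2 (volume.restrict (Ioo (0:ℝ) 1)))
    (hg : MemLp g 2 (volume.restrict (Ioo (0:ℝ) 1))) :
    MemLp (fun x => if x ≤ 1/2 then 2 * f (2 * x) else 2 * g (2 * x - 1)) 2
      (volume.restrict (Ioo (0:ℝ) 1)) := by
  rw [restrict_split]
  apply memLp_add_meas
  · have h1 : MemLp (fun x => 2 * f (2 * x)) 2 (volume.restrict (Ioc (0:ℝ) (1/2))) := by
      rw [← Measure.restrict_congr_set Ioo_ae_eq_Ioc]
      exact (memLp_comp_half hf).const_mul 2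
    refine h1.ae_eq ?_
    filter_upwards [ae_restrict_mem measurableSet_Ioc] with x hx
    rw [if_pos hx.2]
  · have h1 : MemLp (fun x => 2 * g (2 * x - 1)) 2 (volume.restrict (Ioo (1/2:ℝ) 1)) :=
      (memLp_comp_half' hg).const_mul 2
    refine h1.ae_eq ?_
    filter_upwards [ae_restrict_mem measurableSet_Ioo] with x hx
    rw [if_neg (not_le.2 hx.1)]

lemma integrableOn_of_mem {f : ℝ → ℝ} (hf : MemLp f 2 (volume.restrict (Ioo (0:ℝ) 1))) :
    IntegrableOn f (Icc (0:ℝ) 1) := by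
  rw [integrableOn_Icc_iff_integrableOn_Ioo]
  exact hf.integrable (by norm_num)


lemma glue_ftc {fP fQ dfP dfQ : ℝ → ℝ}
    (hP : ∀ x ∈ Icc (0:ℝ) 1, fP x = fP 0 + ∫ t in Ioc (0:ℝ) x, dfP t)
    (hQ : ∀ x ∈ Icc (0:ℝ) 1, fQ x = fQ 0 + ∫ t in Ioc (0:ℝ) x, dfQ t)
    (hint : IntegrableOn (fun t => if t ≤ 1/2 then 2 * dfP (2*t) else 2 * dfQ (2*t - 1))
      (Icc (0:ℝ) 1) volume)
    {x : ℝ} (hx : x ∈ Icc (0:ℝ) 1) :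
    (if x ≤ 1/2 then fP (2*x) else fP 1 + (fQ (2*x - 1) - fQ 0))
      = fP 0 + ∫ t in Ioc (0:ℝ) x,
          (if t ≤ 1/2 then 2 * dfP (2*t) else 2 * dfQ (2*t - 1)) := by
  obtain ⟨hx0, hx1⟩ := hx
  have key1 : ∀ y : ℝ, 0 ≤ y → y ≤ 1/2 →
      (∫ t in Ioc (0:ℝ) y, (if t ≤ 1/2 then 2 * dfP (2*t) else 2 * dfQ (2*t - 1)))
        = fP (2*y) - fP 0 := by
    intro y hy0 hy1
    have e1 : (∫ t in Ioc (0:ℝ) y, (if t ≤ 1/2 then 2 * dfP (2*t) else 2 * dfQ (2*t - 1)))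
        = ∫ t in Ioc (0:ℝ) y, 2 * dfP (2*t) := by
      apply setIntegral_congr_fun measurableSet_Ioc
      intro t ht; simp only [if_pos (le_trans ht.2 hy1)]
    rw [e1, ← intervalIntegral.integral_of_le hy0,
      intervalIntegral.integral_const_mul,
      intervalIntegral.integral_comp_mul_left dfP two_ne_zero]
    have h2 : (2:ℝ) * (2:ℝ)⁻¹ • ∫ t in (2*(0:ℝ))..(2*y), dfP t
        = ∫ t in (0:ℝ)..(2*y), dfP t := by
      rw [smul_eq_mul, ← mul_assoc]; norm_num
    rw [h2, intervalIntegral.integral_of_le (by linarith),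
      show (∫ t in Ioc (0:ℝ) (2*y), dfP t) = fP (2*y) - fP 0 by
        rw [hP (2*y) ⟨by linarith, by linarith⟩]; ring]
  have key2 : ∀ y : ℝ, 1/2 ≤ y → y ≤ 1 →
      (∫ t in Ioc (1/2:ℝ) y, (if t ≤ 1/2 then 2 * dfP (2*t) else 2 * dfQ (2*t - 1)))
        = fQ (2*y - 1) - fQ 0 := by
    intro y hy0 hy1
    have e1 : (∫ t in Ioc (1/2:ℝ) y, (if t ≤ 1/2 then 2 * dfP (2*t) else 2 * dfQ (2*t - 1)))
        = ∫ t in Ioc (1/2:ℝ) y, 2 * dfQ (2*t - 1) := by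
      apply setIntegral_congr_fun measurableSet_Ioc
      intro t ht; simp only [if_neg (not_le.2 ht.1)]
    rw [e1, ← intervalIntegral.integral_of_le hy0,
      intervalIntegral.integral_const_mul,
      intervalIntegral.integral_comp_mul_sub dfQ two_ne_zero 1]
    have h2 : (2:ℝ) * (2:ℝ)⁻¹ • ∫ t in (2*(1/2:ℝ)-1)..(2*y-1), dfQ t
        = ∫ t in (0:ℝ)..(2*y-1), dfQ t := by
      rw [smul_eq_mul, ← mul_assoc]; norm_num
    rw [h2, intervalIntegral.integral_of_le (by linarith),
      show (∫ t in Ioc (0:ℝ) (2*y-1), dfQ t) = fQ (2*y-1) - fQ 0 by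
        rw [hQ (2*y-1) ⟨by linarith, by linarith⟩]; ring]
  by_cases hxh : x ≤ 1/2
  · rw [if_pos hxh, key1 x hx0 hxh]; ring
  · push_neg at hxh
    rw [if_neg (not_le.2 hxh)]
    have hsplit : (∫ t in Ioc (0:ℝ) x, (if t ≤ 1/2 then 2 * dfP (2*t) else 2 * dfQ (2*t - 1)))
        = (∫ t in Ioc (0:ℝ) (1/2), (if t ≤ 1/2 then 2 * dfP (2*t) else 2 * dfQ (2*t - 1)))
          + ∫ t in Ioc (1/2:ℝ) x, (if t ≤ 1/2 then 2 * dfP (2*t) else 2 * dfQ (2*t - 1)) := by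
      rw [← setIntegral_union (Set.Ioc_disjoint_Ioc_of_le le_rfl) measurableSet_Ioc
        (hint.mono_set (fun t ht => ⟨le_of_lt ht.1, le_trans ht.2 (by norm_num)⟩))
        (hint.mono_set (fun t ht => ⟨le_trans (by norm_num) (le_of_lt ht.1), le_trans ht.2 hx1⟩)),
        Set.Ioc_union_Ioc_eq_Ioc (by norm_num) (le_of_lt hxh)]
    rw [hsplit, key1 (1/2) (by norm_num) le_rfl, key2 x (le_of_lt hxh) hx1]
    norm_num
    ring

/-- The integrand of the surface energy. -/
def integrand (ψ : ℝ → ℝ) (P : H1Pair 1) (t : ℝ) : ENNReal :=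
  if P.b t = 1 ∧ P.da t ≠ 0 then ⊤ else
      ENNReal.ofReal (|1 - P.b t| *
        Real.sqrt ((ψ (P.b t))^2 * (P.da t)^2 + (P.db t)^2))

lemma thetaEnergy_eq (ψ : ℝ → ℝ) (P : H1Pair 1) :
    thetaEnergy ψ P = ∫⁻ t in Ioo (0:ℝ) 1, integrand ψ P t := rfl

lemma two_halves : (2:ENNReal) * ENNReal.ofReal (1/2) = 1 := by
  rw [show (1/2:ℝ) = 2⁻¹ by norm_num, ENNReal.ofReal_inv_of_pos (by norm_num)]
  rw [show ENNReal.ofReal (2:ℝ) = 2 by simp]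
  exact ENNReal.mul_inv_cancel two_ne_zero ENNReal.ofNat_ne_top

lemma integrand_scale (ψb absb da db : ℝ) (cond : Prop) [Decidable cond] :
    (if cond ∧ 2 * da ≠ 0 then (⊤:ENNReal) else
      ENNReal.ofReal (absb * Real.sqrt (ψb^2 * (2*da)^2 + (2*db)^2)))
    = 2 * (if cond ∧ da ≠ 0 then (⊤:ENNReal) else
      ENNReal.ofReal (absb * Real.sqrt (ψb^2 * da^2 + db^2))) := by
  have hcond : (cond ∧ 2 * da ≠ 0) ↔ (cond ∧ da ≠ 0) := by
    constructor
    · rintro ⟨h1, h2⟩; exact ⟨h1, fun h => h2 (by rw [h, mul_zero])⟩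
    · rintro ⟨h1, h2⟩; exact ⟨h1, mul_ne_zero two_ne_zero h2⟩
  rw [if_congr hcond rfl rfl]
  split_ifs with h
  · rw [ENNReal.mul_top (by norm_num)]
  · have h4 : ψb^2 * (2*da)^2 + (2*db)^2 = 4 * (ψb^2 * da^2 + db^2) := by ring
    rw [h4, Real.sqrt_mul (by norm_num) _,
      show Real.sqrt 4 = 2 by
        rw [show (4:ℝ) = 2^2 by norm_num, Real.sqrt_sq (by norm_num)],
      show absb * (2 * Real.sqrt (ψb^2 * da^2 + db^2))
        = 2 * (absb * Real.sqrt (ψb^2 * da^2 + db^2)) by ring,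
      ENNReal.ofReal_mul (by norm_num)]
    simp

/-- Gluing two pairs, each squeezed into half of the interval. -/
noncomputable def glue (P Q : H1Pair 1) : H1Pair 1 where
  a x := if x ≤ 1/2 then P.a (2*x) else P.a 1 + (Q.a (2*x - 1) - Q.a 0)
  b x := if x ≤ 1/2 then P.b (2*x) else P.b 1 + (Q.b (2*x - 1) - Q.b 0)
  da x := if x ≤ 1/2 then 2 * P.da (2*x) else 2 * Q.da (2*x - 1)
  db x := if x ≤ 1/2 then 2 * P.db (2*x) else 2 * Q.db (2*x - 1)
  da_mem := glue_mem P.da_mem Q.da_mem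
  db_mem := glue_mem P.db_mem Q.db_mem
  a_ftc := by
    intro x hx
    have h := glue_ftc P.a_ftc Q.a_ftc
      (integrableOn_of_mem (glue_mem P.da_mem Q.da_mem)) hx
    rw [if_pos (by norm_num : (0:ℝ) ≤ 1/2), show (2:ℝ) * 0 = 0 by ring]
    exact h
  b_ftc := by
    intro x hx
    have h := glue_ftc P.b_ftc Q.b_ftc
      (integrableOn_of_mem (glue_mem P.db_mem Q.db_mem)) hx
    rw [if_pos (by norm_num : (0:ℝ) ≤ 1/2), show (2:ℝ) * 0 = 0 by ring]
    exact h

lemma glue_adm {P Q : H1Pair 1} {s δ : ℝ} (hP : P.Admissible s) (hQ : Q.Admissible δ) :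
    (glue P Q).Admissible (s + δ) := by
  obtain ⟨hPr, hPa0, hPa1, hPb0, hPb1⟩ := hP
  obtain ⟨hQr, hQa0, hQa1, hQb0, hQb1⟩ := hQ
  refine ⟨?_, ?_, ?_, ?_, ?_⟩
  · intro t ht
    show (if t ≤ 1/2 then P.b (2*t) else P.b 1 + (Q.b (2*t - 1) - Q.b 0)) ∈ Icc (0:ℝ) 1
    by_cases h : t ≤ 1/2
    · rw [if_pos h]; exact hPr (2*t) ⟨by linarith [ht.1], by linarith⟩
    · push_neg at h
      rw [if_neg (not_le.2 h), hPb1, hQb0,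
        show (1:ℝ) + (Q.b (2*t-1) - 1) = Q.b (2*t-1) by ring]
      exact hQr (2*t-1) ⟨by linarith, by linarith [ht.2]⟩
  · show (if (0:ℝ) ≤ 1/2 then P.a (2*0) else _) = 0
    rw [if_pos (by norm_num : (0:ℝ) ≤ 1/2), show (2:ℝ)*0 = 0 by ring, hPa0]
  · show (if (1:ℝ) ≤ 1/2 then P.a (2*1) else P.a 1 + (Q.a (2*1 - 1) - Q.a 0)) = s + δ
    rw [if_neg (by norm_num), show (2:ℝ)*1 - 1 = 1 by ring, hPa1, hQa1, hQa0]; ring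
  · show (if (0:ℝ) ≤ 1/2 then P.b (2*0) else _) = 1
    rw [if_pos (by norm_num : (0:ℝ) ≤ 1/2), show (2:ℝ)*0 = 0 by ring, hPb0]
  · show (if (1:ℝ) ≤ 1/2 then P.b (2*1) else P.b 1 + (Q.b (2*1 - 1) - Q.b 0)) = 1
    rw [if_neg (by norm_num), show (2:ℝ)*1 - 1 = 1 by ring, hPb1, hQb1, hQb0]; ring

lemma glue_energy (ψ : ℝ → ℝ) (P Q : H1Pair 1) (hPb : P.b 1 = 1) (hQb : Q.b 0 = 1) :
    thetaEnergy ψ (glue P Q) = thetaEnergy ψ P + thetaEnergy ψ Q := by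
  calc thetaEnergy ψ (glue P Q)
      = (∫⁻ t in Ioo (0:ℝ) (1/2), integrand ψ (glue P Q) t)
        + ∫⁻ t in Ioo (1/2:ℝ) 1, integrand ψ (glue P Q) t := by
        rw [thetaEnergy_eq, Ioo01_split,
          lintegral_union measurableSet_Ioo
            (by rw [Set.disjoint_left]; rintro x ⟨_, h2⟩ ⟨h3, _⟩; exact absurd h2 (not_le.2 h3)),
          ← Measure.restrict_congr_set Ioo_ae_eq_Ioc]
    _ = (∫⁻ t in Ioo (0:ℝ) (1/2), 2 * integrand ψ P (2*t))
        + ∫⁻ t in Ioo (1/2:ℝ) 1, 2 * integrand ψ Q (2*t - 1) := by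
        congr 1
        · apply lintegral_congr_ae
          filter_upwards [ae_restrict_mem measurableSet_Ioo] with t ht
          have h2 : t ≤ 1/2 := le_of_lt ht.2
          show integrand ψ (glue P Q) t = 2 * integrand ψ P (2*t)
          simp only [integrand, glue, if_pos h2]
          exact integrand_scale _ _ _ _ _
        · apply lintegral_congr_ae
          filter_upwards [ae_restrict_mem measurableSet_Ioo] with t ht
          have h2 : ¬(t ≤ 1/2) := not_le.2 ht.1
          show integrand ψ (glue P Q) t = 2 * integrand ψ Q (2*t - 1)
          simp only [integrand, glue, if_neg h2]
          rw [hPb, hQb, show (1:ℝ) + (Q.b (2*t-1) - 1) = Q.b (2*t-1) by ring]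
          exact integrand_scale _ _ _ _ _
    _ = thetaEnergy ψ P + thetaEnergy ψ Q := by
        rw [lintegral_const_mul' _ _ (by simp : (2:ENNReal) ≠ ⊤),
          lintegral_const_mul' _ _ (by simp : (2:ENNReal) ≠ ⊤),
          lint_half, lint_half', ← mul_assoc, ← mul_assoc, two_halves, one_mul, one_mul,
          thetaEnergy_eq, thetaEnergy_eq]

instance vol01c : IsFiniteMeasure (volume.restrict (Icc (0:ℝ) 1)) := by
  constructor
  rw [Measure.restrict_apply_univ]
  simp [Real.volume_Icc]

/-- The trivial competitor for `s = 0`. -/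
noncomputable def trivialPair : H1Pair 1 where
  a _ := 0
  b _ := 1
  da _ := 0
  db _ := 0
  da_mem := memLp_const 0
  db_mem := memLp_const 0
  a_ftc := by intro x hx; simp
  b_ftc := by intro x hx; simp

lemma trivial_adm : trivialPair.Admissible 0 :=
  ⟨fun t _ => ⟨by norm_num [trivialPair], by norm_num [trivialPair]⟩, rfl, rfl, rfl, rfl⟩

lemma trivial_energy (ψ : ℝ → ℝ) : thetaEnergy ψ trivialPair = 0 := by
  rw [thetaEnergy_eq]
  have : ∀ t : ℝ, integrand ψ trivialPair t = 0 := by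
    intro t
    simp [integrand, trivialPair]
  simp only [this, lintegral_zero]

lemma thetaE_zero (ψ : ℝ → ℝ) : thetaE ψ 0 = 0 := by
  refine le_antisymm ?_ zero_le
  have h := iInf₂_le (f := fun (P : H1Pair 1) (_ : P.Admissible 0) => thetaEnergy ψ P)
    trivialPair trivial_adm
  rw [trivial_energy] at h
  exact h

/-- A three-piece step function on `[0,1]`. -/
noncomputable def step (c₁ c₂ c₃ : ℝ) (t : ℝ) : ℝ :=
  if t ≤ 1/4 then c₁ else if t ≤ 3/4 then c₂ else c₃

lemma step_meas (c₁ c₂ c₃ : ℝ) : Measurable (step c₁ c₂ c₃) := by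
  unfold step
  exact Measurable.ite measurableSet_Iic measurable_const
    (Measurable.ite measurableSet_Iic measurable_const measurable_const)

lemma step_abs (c₁ c₂ c₃ t : ℝ) : |step c₁ c₂ c₃ t| ≤ |c₁| + |c₂| + |c₃| := by
  unfold step
  split_ifs <;> [linarith [abs_nonneg c₂, abs_nonneg c₃];
    linarith [abs_nonneg c₁, abs_nonneg c₃]; linarith [abs_nonneg c₁, abs_nonneg c₂]]

lemma step_memLp (c₁ c₂ c₃ : ℝ) :
    MemLp (step c₁ c₂ c₃) 2 (volume.restrict (Ioo (0:ℝ) 1)) := by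
  refine MemLp.of_bound ((step_meas _ _ _).aestronglyMeasurable) (|c₁| + |c₂| + |c₃|)
    (ae_of_all _ ?_)
  intro t; rw [Real.norm_eq_abs]; exact step_abs _ _ _ _

lemma step_intOn (c₁ c₂ c₃ : ℝ) : IntegrableOn (step c₁ c₂ c₃) (Icc (0:ℝ) 1) := by
  refine Integrable.mono' (integrable_const (|c₁| + |c₂| + |c₃|))
    ((step_meas _ _ _).aestronglyMeasurable) (ae_of_all _ ?_)
  intro t; rw [Real.norm_eq_abs]; exact step_abs _ _ _ _

lemma step_integral (c₁ c₂ c₃ : ℝ) {x : ℝ} (hx : x ∈ Icc (0:ℝ) 1) :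
    ∫ t in Ioc (0:ℝ) x, step c₁ c₂ c₃ t
      = c₁ * min x (1/4) + c₂ * (min x (3/4) - min x (1/4)) + c₃ * (x - min x (3/4)) := by
  obtain ⟨hx0, hx1⟩ := hx
  have hconst : ∀ (a b : ℝ) (c : ℝ), a ≤ b → (∫ _ in Ioc a b, c) = (b - a) * c := by
    intro a b c hab
    rw [setIntegral_const, Real.volume_real_Ioc_of_le hab, smul_eq_mul]
  rcases le_or_gt x (1/4) with h1 | h1
  · have e : EqOn (step c₁ c₂ c₃) (fun _ => c₁) (Ioc 0 x) :=
      fun t ht => if_pos (le_trans ht.2 h1)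
    rw [setIntegral_congr_fun measurableSet_Ioc e, hconst _ _ _ hx0,
      min_eq_left h1, min_eq_left (by linarith)]
    ring
  · rcases le_or_gt x (3/4) with h2 | h2
    · have hsp : Ioc (0:ℝ) x = Ioc 0 (1/4) ∪ Ioc (1/4) x :=
        (Ioc_union_Ioc_eq_Ioc (by norm_num) (le_of_lt h1)).symm
      rw [hsp, setIntegral_union (Set.Ioc_disjoint_Ioc_of_le le_rfl) measurableSet_Ioc
        ((step_intOn _ _ _).mono_set (fun t ht => ⟨le_of_lt ht.1, by linarith [ht.2]⟩))
        ((step_intOn _ _ _).mono_set (fun t ht => ⟨by linarith [ht.1], le_trans ht.2 hx1⟩))]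
      have e1 : EqOn (step c₁ c₂ c₃) (fun _ => c₁) (Ioc 0 (1/4)) := fun t ht => if_pos ht.2
      have e2 : EqOn (step c₁ c₂ c₃) (fun _ => c₂) (Ioc (1/4) x) := by
        intro t ht
        unfold step
        rw [if_neg (not_le.2 ht.1), if_pos (le_trans ht.2 h2)]
      rw [setIntegral_congr_fun measurableSet_Ioc e1, setIntegral_congr_fun measurableSet_Ioc e2,
        hconst _ _ _ (by norm_num), hconst _ _ _ (le_of_lt h1),
        min_eq_right (le_of_lt h1), min_eq_left h2]
      ring
    · have hsp : Ioc (0:ℝ) x = (Ioc 0 (1/4) ∪ Ioc (1/4) (3/4)) ∪ Ioc (3/4) x := by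
        rw [Ioc_union_Ioc_eq_Ioc (by norm_num) (by norm_num),
          Ioc_union_Ioc_eq_Ioc (by norm_num) (le_of_lt h2)]
      have i1 : IntegrableOn (step c₁ c₂ c₃) (Ioc (0:ℝ) (1/4)) :=
        (step_intOn _ _ _).mono_set (fun t ht => ⟨le_of_lt ht.1, by linarith [ht.2]⟩)
      have i2 : IntegrableOn (step c₁ c₂ c₃) (Ioc (1/4:ℝ) (3/4)) :=
        (step_intOn _ _ _).mono_set (fun t ht => ⟨by linarith [ht.1], by linarith [ht.2]⟩)
      have i3 : IntegrableOn (step c₁ c₂ c₃) (Ioc (3/4:ℝ) x) :=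
        (step_intOn _ _ _).mono_set (fun t ht => ⟨by linarith [ht.1], le_trans ht.2 hx1⟩)
      rw [hsp, setIntegral_union (by
          rw [Set.disjoint_left]; rintro t (⟨_, h⟩ | ⟨_, h⟩) ⟨h', _⟩ <;> linarith)
        measurableSet_Ioc (i1.union i2) i3,
        setIntegral_union (Set.Ioc_disjoint_Ioc_of_le le_rfl) measurableSet_Ioc i1 i2]
      have e1 : EqOn (step c₁ c₂ c₃) (fun _ => c₁) (Ioc 0 (1/4)) := fun t ht => if_pos ht.2
      have e2 : EqOn (step c₁ c₂ c₃) (fun _ => c₂) (Ioc (1/4) (3/4)) := by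
        intro t ht
        unfold step
        rw [if_neg (not_le.2 ht.1), if_pos ht.2]
      have e3 : EqOn (step c₁ c₂ c₃) (fun _ => c₃) (Ioc (3/4) x) := by
        intro t ht
        unfold step
        rw [if_neg (by push_neg; linarith [ht.1]), if_neg (not_le.2 ht.1)]
      rw [setIntegral_congr_fun measurableSet_Ioc e1, setIntegral_congr_fun measurableSet_Ioc e2,
        setIntegral_congr_fun measurableSet_Ioc e3,
        hconst _ _ _ (by norm_num), hconst _ _ _ (by norm_num), hconst _ _ _ (le_of_lt h2),
        min_eq_right (by linarith), min_eq_right (by linarith)]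
      ring

/-- The explicit competitor: the damage dips to `1 - r` while `a` moves by `δ`. -/
noncomputable def bump (r δ : ℝ) : H1Pair 1 where
  a t := δ * (if t ≤ 1/4 then 0 else if t ≤ 3/4 then 2*t - 1/2 else 1)
  b t := 1 - r * (if t ≤ 1/4 then 4*t else if t ≤ 3/4 then 1 else 4*(1-t))
  da t := step 0 (2*δ) 0 t
  db t := step (-(4*r)) 0 (4*r) t
  da_mem := step_memLp _ _ _
  db_mem := step_memLp _ _ _
  a_ftc := by
    intro x hx
    rw [step_integral _ _ _ hx]
    obtain ⟨hx0, hx1⟩ := hx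
    rcases le_or_gt x (1/4) with h1 | h1
    · rw [if_pos h1, min_eq_left h1, min_eq_left (by linarith)]
      norm_num
    · rcases le_or_gt x (3/4) with h2 | h2
      · rw [if_neg (not_le.2 h1), if_pos h2, min_eq_right (le_of_lt h1), min_eq_left h2]
        norm_num; ring
      · rw [if_neg (not_le.2 h1), if_neg (not_le.2 h2), min_eq_right (by linarith),
          min_eq_right (le_of_lt h2)]
        norm_num; ring
  b_ftc := by
    intro x hx
    rw [step_integral _ _ _ hx]
    obtain ⟨hx0, hx1⟩ := hx
    rcases le_or_gt x (1/4) with h1 | h1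
    · rw [if_pos h1, min_eq_left h1, min_eq_left (by linarith)]
      norm_num; ring
    · rcases le_or_gt x (3/4) with h2 | h2
      · rw [if_neg (not_le.2 h1), if_pos h2, min_eq_right (le_of_lt h1), min_eq_left h2]
        norm_num; ring
      · rw [if_neg (not_le.2 h1), if_neg (not_le.2 h2), min_eq_right (by linarith),
          min_eq_right (le_of_lt h2)]
        norm_num; ring

lemma bump_adm {r : ℝ} (δ : ℝ) (hr0 : 0 ≤ r) (hr1 : r ≤ 1) : (bump r δ).Admissible δ := by
  refine ⟨?_, ?_, ?_, ?_, ?_⟩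
  · intro t ht
    show (1 - r * (if t ≤ 1/4 then 4*t else if t ≤ 3/4 then 1 else 4*(1-t))) ∈ Icc (0:ℝ) 1
    obtain ⟨ht0, ht1⟩ := ht
    have hw : (if t ≤ 1/4 then 4*t else if t ≤ 3/4 then 1 else 4*(1-t)) ∈ Icc (0:ℝ) 1 := by
      split_ifs with h1 h2
      · exact ⟨by linarith, by linarith⟩
      · exact ⟨by norm_num, le_rfl⟩
      · push_neg at h2; exact ⟨by linarith, by linarith⟩
    have h1 : 0 ≤ r * _ := mul_nonneg hr0 hw.1
    have h2 : r * _ ≤ 1 := mul_le_one₀ hr1 hw.1 hw.2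
    exact ⟨by linarith, by linarith⟩
  · show δ * (if (0:ℝ) ≤ 1/4 then (0:ℝ) else _) = 0
    norm_num
  · show δ * (if (1:ℝ) ≤ 1/4 then (0:ℝ) else if (1:ℝ) ≤ 3/4 then 2*1 - 1/2 else 1) = δ
    norm_num
  · show 1 - r * (if (0:ℝ) ≤ 1/4 then 4*0 else _) = 1
    norm_num
  · show 1 - r * (if (1:ℝ) ≤ 1/4 then 4*1 else if (1:ℝ) ≤ 3/4 then 1 else 4*(1-1)) = 1
    norm_num

lemma bump_energy (ψ : ℝ → ℝ) {r : ℝ} (δ : ℝ) (hr0 : 0 < r) (hr1 : r ≤ 1)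
    (hψ1r : 0 ≤ ψ (1 - r)) :
    thetaEnergy ψ (bump r δ)
      ≤ ENNReal.ofReal (2*r^2 + r * ψ (1-r) * |δ|) := by
  rw [thetaEnergy_eq]
  have hmono : (∫⁻ t in Ioo (0:ℝ) 1, integrand ψ (bump r δ) t)
      ≤ ∫⁻ t in Ioc (0:ℝ) 1, integrand ψ (bump r δ) t :=
    lintegral_mono' (Measure.restrict_mono Ioo_subset_Ioc_self le_rfl) le_rfl
  refine le_trans hmono ?_
  have hsp : Ioc (0:ℝ) 1 = (Ioc 0 (1/4) ∪ Ioc (1/4) (3/4)) ∪ Ioc (3/4) 1 := by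
    rw [Ioc_union_Ioc_eq_Ioc (by norm_num) (by norm_num),
      Ioc_union_Ioc_eq_Ioc (by norm_num) (by norm_num)]
  rw [hsp]
  refine le_trans (lintegral_union_le _ _ _) ?_
  refine le_trans (add_le_add_left (lintegral_union_le _ _ _) _) ?_
  -- pointwise bounds on the three pieces
  have p1 : (∫⁻ t in Ioc (0:ℝ) (1/4), integrand ψ (bump r δ) t) ≤ ENNReal.ofReal (r^2) := by
    have hb : ∀ᵐ t ∂(volume.restrict (Ioc (0:ℝ) (1/4))),
        integrand ψ (bump r δ) t ≤ ENNReal.ofReal (4*r^2) := by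
      filter_upwards [ae_restrict_mem measurableSet_Ioc] with t ht
      have hda : (bump r δ).da t = 0 := by
        show step 0 (2*δ) 0 t = 0
        unfold step; rw [if_pos ht.2]
      have hdb : (bump r δ).db t = -(4*r) := by
        show step (-(4*r)) 0 (4*r) t = -(4*r)
        unfold step; rw [if_pos ht.2]
      have hbt : (bump r δ).b t = 1 - r * (4*t) := by
        show (1 - r * (if t ≤ 1/4 then 4*t else _)) = _
        rw [if_pos ht.2]
      rw [integrand, if_neg (by rintro ⟨_, h⟩; exact h hda), hda, hdb, hbt]
      have h4 : (ψ (1 - r * (4*t)))^2 * (0:ℝ)^2 + (-(4*r))^2 = (4*r)^2 := by ring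
      rw [h4, Real.sqrt_sq (by positivity)]
      apply ENNReal.ofReal_le_ofReal
      have h5 : |1 - (1 - r * (4*t))| = 4*r*t := by
        rw [show (1:ℝ) - (1 - r * (4*t)) = 4*r*t by ring]
        exact abs_of_nonneg (by nlinarith [ht.1.le, hr0.le])
      rw [h5]
      nlinarith [ht.1.le, ht.2, hr0.le]
    refine le_trans (lintegral_mono_ae hb) ?_
    rw [setLIntegral_const, Real.volume_Ioc, show (1/4:ℝ) - 0 = 1/4 by norm_num,
      ← ENNReal.ofReal_mul (by positivity)]
    exact ENNReal.ofReal_le_ofReal (by nlinarith)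
  have p3 : (∫⁻ t in Ioc (3/4:ℝ) 1, integrand ψ (bump r δ) t) ≤ ENNReal.ofReal (r^2) := by
    have hb : ∀ᵐ t ∂(volume.restrict (Ioc (3/4:ℝ) 1)),
        integrand ψ (bump r δ) t ≤ ENNReal.ofReal (4*r^2) := by
      filter_upwards [ae_restrict_mem measurableSet_Ioc] with t ht
      have h14 : ¬ (t ≤ 1/4) := by push_neg; linarith [ht.1]
      have h34 : ¬ (t ≤ 3/4) := not_le.2 ht.1
      have hda : (bump r δ).da t = 0 := by
        show step 0 (2*δ) 0 t = 0
        unfold step; rw [if_neg h14, if_neg h34]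
      have hdb : (bump r δ).db t = 4*r := by
        show step (-(4*r)) 0 (4*r) t = 4*r
        unfold step; rw [if_neg h14, if_neg h34]
      have hbt : (bump r δ).b t = 1 - r * (4*(1-t)) := by
        show (1 - r * (if t ≤ 1/4 then 4*t else if t ≤ 3/4 then 1 else 4*(1-t))) = _
        rw [if_neg h14, if_neg h34]
      rw [integrand, if_neg (by rintro ⟨_, h⟩; exact h hda), hda, hdb, hbt]
      have h4 : (ψ (1 - r * (4*(1-t))))^2 * (0:ℝ)^2 + (4*r)^2 = (4*r)^2 := by ring
      rw [h4, Real.sqrt_sq (by positivity)]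
      apply ENNReal.ofReal_le_ofReal
      have ht1 : 1 - t ≥ 0 := by linarith [ht.2]
      have h5 : |1 - (1 - r * (4*(1-t)))| = 4*r*(1-t) := by
        rw [show (1:ℝ) - (1 - r * (4*(1-t))) = 4*r*(1-t) by ring]
        exact abs_of_nonneg (by nlinarith [ht1, hr0.le])
      rw [h5]
      nlinarith [ht.1, ht.2, hr0.le]
    refine le_trans (lintegral_mono_ae hb) ?_
    rw [setLIntegral_const, Real.volume_Ioc, show (1:ℝ) - 3/4 = 1/4 by norm_num,
      ← ENNReal.ofReal_mul (by positivity)]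
    exact ENNReal.ofReal_le_ofReal (by nlinarith)
  have p2 : (∫⁻ t in Ioc (1/4:ℝ) (3/4), integrand ψ (bump r δ) t)
      ≤ ENNReal.ofReal (r * ψ (1-r) * |δ|) := by
    have hb : ∀ᵐ t ∂(volume.restrict (Ioc (1/4:ℝ) (3/4))),
        integrand ψ (bump r δ) t ≤ ENNReal.ofReal (2 * (r * ψ (1-r) * |δ|)) := by
      filter_upwards [ae_restrict_mem measurableSet_Ioc] with t ht
      have h14 : ¬ (t ≤ 1/4) := not_le.2 ht.1
      have hda : (bump r δ).da t = 2*δ := by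
        show step 0 (2*δ) 0 t = 2*δ
        unfold step; rw [if_neg h14, if_pos ht.2]
      have hdb : (bump r δ).db t = 0 := by
        show step (-(4*r)) 0 (4*r) t = 0
        unfold step; rw [if_neg h14, if_pos ht.2]
      have hbt : (bump r δ).b t = 1 - r := by
        show (1 - r * (if t ≤ 1/4 then 4*t else if t ≤ 3/4 then 1 else 4*(1-t))) = _
        rw [if_neg h14, if_pos ht.2]; ring
      rw [integrand, if_neg (by
          rintro ⟨h, _⟩
          rw [hbt] at h
          have : r = 0 := by linarith
          exact hr0.ne' this), hda, hdb, hbt]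
      have h4 : (ψ (1-r))^2 * (2*δ)^2 + (0:ℝ)^2 = (ψ (1-r) * (2*δ))^2 := by ring
      rw [h4, Real.sqrt_sq_eq_abs]
      apply ENNReal.ofReal_le_ofReal
      have h5 : |1 - (1 - r)| = r := by
        rw [show (1:ℝ) - (1-r) = r by ring]; exact abs_of_nonneg hr0.le
      rw [h5, abs_mul, abs_of_nonneg hψ1r, abs_mul]
      rw [show |(2:ℝ)| = 2 by norm_num]
      nlinarith [abs_nonneg δ, hr0.le, hψ1r]
    refine le_trans (lintegral_mono_ae hb) ?_
    rw [setLIntegral_const, Real.volume_Ioc, show (3/4:ℝ) - 1/4 = 1/2 by norm_num,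
      ← ENNReal.ofReal_mul (by positivity)]
    exact ENNReal.ofReal_le_ofReal (by nlinarith [abs_nonneg δ, hr0.le, hψ1r])
  calc (∫⁻ t in Ioc (0:ℝ) (1/4), integrand ψ (bump r δ) t)
        + (∫⁻ t in Ioc (1/4:ℝ) (3/4), integrand ψ (bump r δ) t)
        + ∫⁻ t in Ioc (3/4:ℝ) 1, integrand ψ (bump r δ) t
      ≤ ENNReal.ofReal (r^2) + ENNReal.ofReal (r * ψ (1-r) * |δ|) + ENNReal.ofReal (r^2) :=
        add_le_add (add_le_add p1 p2) p3
    _ = ENNReal.ofReal (2*r^2 + r * ψ (1-r) * |δ|) := by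
        rw [← ENNReal.ofReal_add (by positivity) (by positivity),
          ← ENNReal.ofReal_add (by positivity) (by positivity)]
        congr 1; ring

lemma psi_bound (p κ : ℝ) (hp : 1 < p) (ψ : ℝ → ℝ) (hψ : AdmissiblePsi p κ ψ) :
    ∃ M : ℝ, 0 ≤ M ∧ ∀ x ∈ Ico (0:ℝ) 1, (1 - x) ^ p * ψ x ≤ M := by
  obtain ⟨hc, hm, hnn, hz, ht⟩ := hψ
  have h1 := ht (Iio_mem_nhds (lt_add_one κ))
  rw [Filter.mem_map, mem_nhdsLT_iff_exists_Ioo_subset' (show (0:ℝ) < 1 by norm_num)] at h1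
  obtain ⟨l, hl, hsub⟩ := h1
  set a := max l 0 with hadef
  have ha1 : a < 1 := max_lt hl (by norm_num)
  have ha0 : 0 ≤ a := le_max_right _ _
  have hcont : ContinuousOn (fun x => (1 - x) ^ p * ψ x) (Icc 0 a) := by
    apply ContinuousOn.mul
    · exact (continuousOn_const.sub continuousOn_id).rpow_const
        (fun x hx => Or.inr (by linarith))
    · exact hc.mono (fun x hx => ⟨hx.1, lt_of_le_of_lt hx.2 ha1⟩)
  obtain ⟨C, hC⟩ := isCompact_Icc.exists_bound_of_continuousOn hcont
  refine ⟨max (max C (κ+1)) 0, le_max_right _ _, ?_⟩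
  intro x hx
  rcases le_or_gt x a with h | h
  · have h2 := hC x ⟨hx.1, h⟩
    rw [Real.norm_eq_abs] at h2
    exact le_trans (le_trans (le_abs_self _) h2)
      (le_trans (le_max_left _ _) (le_max_left _ _))
  · have hmem : x ∈ Ioo l 1 := ⟨lt_of_le_of_lt (le_max_left l 0) h, hx.2⟩
    have h3 : (1 - x) ^ p * ψ x < κ + 1 := hsub hmem
    exact le_trans (le_of_lt h3) (le_trans (le_max_right C _) (le_max_left _ _))

lemma num_bound (p : ℝ) (hp : 1 < p) (M : ℝ) (hM0 : 0 ≤ M) (ψ : ℝ → ℝ)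
    (hnn : ∀ x ∈ Ico (0:ℝ) 1, 0 ≤ ψ x) (hz : ψ 0 = 0)
    (hMb : ∀ x ∈ Ico (0:ℝ) 1, (1 - x) ^ p * ψ x ≤ M)
    {δ : ℝ} (hδ : δ ≠ 0) :
    2 * (min (|δ| ^ (1/(p+1))) 1)^2
      + (min (|δ| ^ (1/(p+1))) 1) * ψ (1 - min (|δ| ^ (1/(p+1))) 1) * |δ|
      ≤ (2 + M) * |δ| ^ (2/(p+1)) := by
  set r := min (|δ| ^ (1/(p+1))) 1 with hrdef
  have hδ0 : 0 < |δ| := abs_pos.2 hδ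
  have hp1 : 0 < p + 1 := by linarith
  have hrpos : 0 < r := lt_min (Real.rpow_pos_of_pos hδ0 _) one_pos
  have keyraw : (|δ| ^ (1/(p+1)))^(2:ℕ) = |δ| ^ (2/(p+1)) := by
    rw [← Real.rpow_natCast (|δ| ^ (1/(p+1))) 2, ← Real.rpow_mul (abs_nonneg δ)]
    congr 1
    push_cast
    ring
  rcases le_or_gt 1 (|δ| ^ (1/(p+1))) with h | h
  · have hr : r = 1 := min_eq_right h
    have h2 : 1 ≤ |δ| ^ (2/(p+1)) := by rw [← keyraw]; nlinarith
    rw [hr, show (1:ℝ) - 1 = 0 by ring, hz]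
    nlinarith
  · have hr : r = |δ| ^ (1/(p+1)) := min_eq_left h.le
    have hr1 : r < 1 := by rw [hr]; exact h
    have key : r^(2:ℕ) = |δ| ^ (2/(p+1)) := by rw [hr]; exact keyraw
    have hψb : r ^ p * ψ (1-r) ≤ M := by
      have h4 := hMb (1-r) ⟨by linarith, by linarith⟩
      rwa [show (1:ℝ) - (1-r) = r by ring] at h4
    have hrp : 0 < r ^ p := Real.rpow_pos_of_pos hrpos p
    have hψnn : 0 ≤ ψ (1-r) := hnn (1-r) ⟨by linarith, by linarith⟩
    have hmid : r * ψ (1-r) * |δ| ≤ M * |δ| ^ (2/(p+1)) := by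
      have hψle : ψ (1-r) ≤ M / r^p := by
        rw [le_div_iff₀ hrp]
        calc ψ (1-r) * r^p = r^p * ψ (1-r) := by ring
          _ ≤ M := hψb
      calc r * ψ (1-r) * |δ| ≤ r * (M / r^p) * |δ| := by
            apply mul_le_mul_of_nonneg_right
              (mul_le_mul_of_nonneg_left hψle hrpos.le) (abs_nonneg δ)
        _ = M * (r / r^p * |δ|) := by ring
        _ = M * |δ| ^ (2/(p+1)) := by
            congr 1
            rw [hr, ← Real.rpow_mul (abs_nonneg δ) (1/(p+1)) p,
              ← Real.rpow_sub hδ0]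
            nth_rewrite 2 [show |δ| = |δ| ^ (1:ℝ) from (Real.rpow_one _).symm]
            rw [← Real.rpow_add hδ0]
            congr 1
            field_simp
            ring
    have hfirst : 2 * r^2 = 2 * |δ|^(2/(p+1)) := by rw [← key]
    linarith

lemma thetaE_key (p κ : ℝ) (hp : 1 < p) (ψ : ℝ → ℝ) (hψ : AdmissiblePsi p κ ψ)
    (M : ℝ) (hM0 : 0 ≤ M) (hMb : ∀ x ∈ Ico (0:ℝ) 1, (1 - x) ^ p * ψ x ≤ M) :
    ∀ s δ : ℝ, δ ≠ 0 →
      thetaE ψ (s + δ) ≤ thetaE ψ s + ENNReal.ofReal ((2+M) * |δ| ^ (2/(p+1))) := by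
  intro s δ hδ
  set r := min (|δ| ^ (1/(p+1))) 1 with hrdef
  have hδ0 : 0 < |δ| := abs_pos.2 hδ
  have hrpos : 0 < r := lt_min (Real.rpow_pos_of_pos hδ0 _) one_pos
  have hr1 : r ≤ 1 := min_le_right _ _
  have hψnn := hψ.2.2.1
  have hψz : ψ 0 = 0 := (hψ.2.2.2.1 0 ⟨le_rfl, by norm_num⟩).2 rfl
  have hQE : thetaEnergy ψ (bump r δ) ≤ ENNReal.ofReal ((2+M) * |δ| ^ (2/(p+1))) := by
    refine le_trans (bump_energy ψ δ hrpos hr1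
      (hψnn _ ⟨by linarith, by linarith⟩)) (ENNReal.ofReal_le_ofReal ?_)
    exact num_bound p hp M hM0 ψ hψnn hψz hMb hδ
  have hrw : thetaE ψ s + ENNReal.ofReal ((2+M) * |δ| ^ (2/(p+1)))
      = ⨅ (P : H1Pair 1), ((⨅ (_ : P.Admissible s), thetaEnergy ψ P)
          + ENNReal.ofReal ((2+M) * |δ| ^ (2/(p+1)))) := by
    rw [thetaE, ENNReal.iInf_add]
  rw [hrw]
  refine le_iInf fun P => ?_
  rw [ENNReal.iInf_add]
  refine le_iInf fun hadm => ?_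
  have hbadm := bump_adm δ hrpos.le hr1
  calc thetaE ψ (s + δ) ≤ thetaEnergy ψ (glue P (bump r δ)) :=
        iInf₂_le _ (glue_adm hadm hbadm)
    _ = thetaEnergy ψ P + thetaEnergy ψ (bump r δ) :=
        glue_energy ψ _ _ hadm.2.2.2.2 hbadm.2.2.2.1
    _ ≤ thetaEnergy ψ P + ENNReal.ofReal ((2+M) * |δ| ^ (2/(p+1))) :=
        add_le_add_right hQE _

end

/-- The surface energy density `θ_p` is Hölder continuous on `[0,∞)`
with exponent `2/(p+1)`: there is a constant `C ≥ 0` such that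
`|θ_p(s₁) − θ_p(s₂)| ≤ C |s₁ − s₂|^{2/(p+1)}` for all `s₁, s₂ ≥ 0`. -/
theorem theta_holder (p κ : ℝ) (hp : 1 < p) (hκ : 0 < κ)
    (ψ : ℝ → ℝ) (hψ : AdmissiblePsi p κ ψ) :
    ∃ C : ℝ, 0 ≤ C ∧ ∀ s₁ s₂ : ℝ, 0 ≤ s₁ → 0 ≤ s₂ →
      |theta ψ s₁ - theta ψ s₂| ≤ C * |s₁ - s₂| ^ (2 / (p + 1)) := by
  obtain ⟨M, hM0, hMb⟩ := psi_bound p κ hp ψ hψ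
  refine ⟨2 + M, by linarith, ?_⟩
  have hkey := thetaE_key p κ hp ψ hψ M hM0 hMb
  have hub : ∀ s : ℝ, thetaE ψ s ≤ ENNReal.ofReal ((2+M) * |s| ^ (2/(p+1))) := by
    intro s
    rcases eq_or_ne s 0 with rfl | hs
    · rw [thetaE_zero]; exact zero_le
    · have h := hkey 0 s hs
      rwa [zero_add, thetaE_zero, zero_add] at h
  have hfin : ∀ s : ℝ, thetaE ψ s ≠ ⊤ :=
    fun s => ne_top_of_le_ne_top ENNReal.ofReal_ne_top (hub s)
  intro s₁ s₂ _ _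
  rcases eq_or_ne s₁ s₂ with rfl | hne
  · have hγ : (2/(p+1)) ≠ 0 := by positivity
    simp [sub_self, abs_zero, Real.zero_rpow hγ]
  · set δ := s₂ - s₁ with hδdef
    have hδ : δ ≠ 0 := sub_ne_zero.2 (Ne.symm hne)
    have hc0 : 0 ≤ (2+M) * |δ| ^ (2/(p+1)) := by positivity
    have h1 : thetaE ψ s₂ ≤ thetaE ψ s₁ + ENNReal.ofReal ((2+M) * |δ| ^ (2/(p+1))) := by
      have h := hkey s₁ δ hδ
      rwa [show s₁ + δ = s₂ by rw [hδdef]; ring] at h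
    have h2 : thetaE ψ s₁ ≤ thetaE ψ s₂ + ENNReal.ofReal ((2+M) * |δ| ^ (2/(p+1))) := by
      have h := hkey s₂ (-δ) (neg_ne_zero.2 hδ)
      rwa [show s₂ + -δ = s₁ by rw [hδdef]; ring, abs_neg] at h
    have key : ∀ u v : ℝ,
        thetaE ψ u ≤ thetaE ψ v + ENNReal.ofReal ((2+M) * |δ| ^ (2/(p+1))) →
        theta ψ u - theta ψ v ≤ (2+M) * |δ| ^ (2/(p+1)) := by
      intro u v h
      have hmono := ENNReal.toReal_mono
        (ENNReal.add_ne_top.2 ⟨hfin v, ENNReal.ofReal_ne_top⟩) h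
      rw [ENNReal.toReal_add (hfin v) ENNReal.ofReal_ne_top,
        ENNReal.toReal_ofReal hc0] at hmono
      simp only [theta]
      linarith
    have e1 := key s₂ s₁ h1
    have e2 := key s₁ s₂ h2
    rw [show |s₁ - s₂| = |δ| by rw [hδdef, abs_sub_comm]]
    exact abs_sub_le_iff.2 ⟨by linarith, by linarith⟩
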